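/- arXiv:2005.06275 — 6 statements merged into one kernel-verified Lean document; each statement's English description precedes it below -/
import Mathlib

section
/- Let F be a field and let M, N be p×q matrices over F. If M and N have the same null space, i.e., for every x ∈ F^q one has M·x = 0 if and only if N·x = 0, then M and N are row equivalent: there exists an invertible p×p matrix P with N = P * M. -/
/-!
Equal kernels make `x ↦ M x` and `x ↦ N x` factor through the same quotient of `F^q`, so
`M x ↦ N x` is a well-defined isomorphism between the column spaces of `M` and `N`. Complements
of these column spaces then have equal dimension, so the isomorphism extends to an automorphism
of `F^p`; its matrix is `P`.
-/

open Matrix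

/-- `E.IsPivot i j` : sweeping row `i` of `E` from the left, the first nonzero
entry is met at column `j` (i.e. `E i j ≠ 0` and all entries to its left vanish). -/
def Matrix.IsPivot {F : Type*} [Field F] {p q : ℕ}
    (E : Matrix (Fin p) (Fin q) F) (i : Fin p) (j : Fin q) : Prop :=
  E i j ≠ 0 ∧ ∀ j' : Fin q, j' < j → E i j' = 0

/-- `E` is in row reduced echelon form:
(1) the first nonzero entry of every nonzero row is `1`;
(2) a pivot is the only nonzero entry of its column;
(3) a pivot in a lower row lies in a column strictly to the right;
(4) zero rows are at the bottom. -/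
def Matrix.IsRREF {F : Type*} [Field F] {p q : ℕ}
    (E : Matrix (Fin p) (Fin q) F) : Prop :=
  (∀ i j, E.IsPivot i j → E i j = 1) ∧
  (∀ i j, E.IsPivot i j → ∀ i' : Fin p, i' ≠ i → E i' j = 0) ∧
  (∀ i₁ j₁ i₂ j₂, E.IsPivot i₁ j₁ → E.IsPivot i₂ j₂ → i₁ < i₂ → j₁ < j₂) ∧
  (∀ i i' : Fin p, i ≤ i' → (∀ j, E i j = 0) → ∀ j, E i' j = 0)

/-- Two `p × q` matrices are row equivalent iff one is obtained from the
other by left multiplication by an invertible `p × p` matrix. -/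
def Matrix.RowEquiv {F : Type*} [Field F] {p q : ℕ}
    (M N : Matrix (Fin p) (Fin q) F) : Prop :=
  ∃ P : Matrix (Fin p) (Fin p) F, IsUnit P ∧ N = P * M

section

variable {K V W : Type*} [Field K] [AddCommGroup V] [Module K V] [AddCommGroup W] [Module K W]

theorem LinearMap.exists_rangeEquiv_of_ker_eq {f g : V →ₗ[K] W} (h : ker f = ker g) :
    ∃ e : range f ≃ₗ[K] range g, ∀ v, (e ⟨f v, mem_range_self f v⟩ : W) = g v :=
  ⟨f.quotKerEquivRange.symm ≪≫ₗ Submodule.quotEquivOfEq _ _ h ≪≫ₗ g.quotKerEquivRange,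
    fun v => by simp⟩

variable [FiniteDimensional K W]

theorem LinearEquiv.exists_extend {U U' : Submodule K W} (e : U ≃ₗ[K] U') :
    ∃ e' : W ≃ₗ[K] W, ∀ u : U, e' u = e u := by
  obtain ⟨C, hC⟩ := U.exists_isCompl
  obtain ⟨C', hC'⟩ := U'.exists_isCompl
  have hdim : Module.finrank K C = Module.finrank K C' := by
    have := Submodule.finrank_add_eq_of_isCompl hC
    have := Submodule.finrank_add_eq_of_isCompl hC'
    have := e.finrank_eq
    omega
  refine ⟨(U.prodEquivOfIsCompl C hC).symm ≪≫ₗ e.prodCongr (ofFinrankEq C C' hdim) ≪≫ₗ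
    U'.prodEquivOfIsCompl C' hC', fun u => ?_⟩
  simp

theorem LinearMap.exists_linearEquiv_comp_eq_of_ker_eq {f g : V →ₗ[K] W} (h : ker f = ker g) :
    ∃ e : W ≃ₗ[K] W, e.toLinearMap ∘ₗ f = g := by
  obtain ⟨e, he⟩ := exists_rangeEquiv_of_ker_eq h
  obtain ⟨e', he'⟩ := e.exists_extend
  exact ⟨e', LinearMap.ext fun v => (he' _).trans (he v)⟩

end

/-- Matrices with the same null space are row equivalent. -/
theorem rowEquiv_of_same_nullspace {F : Type*} [Field F] {p q : ℕ}
    (M N : Matrix (Fin p) (Fin q) F)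
    (h : ∀ x : Fin q → F, M.mulVec x = 0 ↔ N.mulVec x = 0) :
    ∃ P : Matrix (Fin p) (Fin p) F, IsUnit P ∧ N = P * M := by
  have hker : LinearMap.ker M.mulVecLin = LinearMap.ker N.mulVecLin := by
    ext x
    exact h x
  obtain ⟨e, he⟩ := LinearMap.exists_linearEquiv_comp_eq_of_ker_eq hker
  refine ⟨LinearMap.toMatrix' e, LinearMap.isUnit_toMatrix'_iff.mpr
    ((Module.End.isUnit_iff _).mpr e.bijective), ?_⟩
  rw [← LinearMap.toMatrix'_toLin' N, toLin'_apply', ← he, LinearMap.toMatrix'_comp,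
    ← toLin'_apply', LinearMap.toMatrix'_toLin']
end

section
/- Let F be a field and let M, N be p×q matrices over F. If M and N have the same null space, i.e., for every x ∈ F^q one has M·x = 0 if and only if N·x = 0, then M and N have the same row space: the span in F^q of the rows of M equals the span of the rows of N. (The null space of a matrix determines its row space; no orthogonality is needed.) -/
open Matrix

/-! Identified with functionals through the dot product, the rows of `M` span the image of the
dual map of `x ↦ M *ᵥ x`, and over a field the image of a dual map is the annihilator of its
kernel. -/

theorem Matrix.map_dotProductEquiv_span_range_row {K m n : Type*} [Field K] [Fintype m]
    [Fintype n] [DecidableEq n] (M : Matrix m n K) :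
    (Submodule.span K (Set.range M.row)).map (dotProductEquiv K n).toLinearMap =
      (LinearMap.ker M.mulVecLin).dualAnnihilator := by
  classical
  have hcomm : (dotProductEquiv K n).toLinearMap ∘ₗ M.vecMulLinear =
      M.mulVecLin.dualMap ∘ₗ (dotProductEquiv K m).toLinearMap := by
    refine LinearMap.ext fun x => LinearMap.ext fun y => ?_
    exact (dotProduct_mulVec x M y).symm
  rw [← range_vecMulLinear, ← LinearMap.range_comp, hcomm, LinearMap.range_comp,
    LinearEquiv.range, Submodule.map_top, LinearMap.range_dualMap_eq_dualAnnihilator_ker]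

/-- The null space of a matrix determines its row space. -/
theorem rowSpace_eq_of_same_nullspace {F : Type*} [Field F] {p q : ℕ}
    (M N : Matrix (Fin p) (Fin q) F)
    (h : ∀ x : Fin q → F, M.mulVec x = 0 ↔ N.mulVec x = 0) :
    Submodule.span F (Set.range (fun i : Fin p => M i)) =
      Submodule.span F (Set.range (fun i : Fin p => N i)) := by
  have hker : LinearMap.ker M.mulVecLin = LinearMap.ker N.mulVecLin := by
    ext x
    exact h x
  apply Submodule.map_injective_of_injective (dotProductEquiv F (Fin q)).injective
  calc _ = (LinearMap.ker M.mulVecLin).dualAnnihilator := map_dotProductEquiv_span_range_row M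
    _ = (LinearMap.ker N.mulVecLin).dualAnnihilator := by rw [hker]
    _ = _ := (map_dotProductEquiv_span_range_row N).symm
end

section
/- Let F be a field, let M, N be p×q matrices over F, and let b, c ∈ F^p. Suppose the linear systems M·x = b and N·x = c are both consistent (each has at least one solution) and are solution equivalent, i.e., {x ∈ F^q : M·x = b} = {x ∈ F^q : N·x = c}. Then the two systems are row equivalent: there exists an invertible p×p matrix P with N = P * M and c = P·b. -/
open Matrix

/-!
If `M x₀ = b`, the solutions of `M x = b` are `x₀ + ker M`; so two consistent systems with the same
solutions have `ker M = ker N` (and `N x₀ = c`). Two linear maps with the same kernel differ by an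
isomorphism between their ranges, and since the ranges have complements of equal dimension this
isomorphism extends to an automorphism `P` of `F^p`. Then `N = P * M` and
`P b = P M x₀ = N x₀ = c`.
-/

theorem Submodule.exists_linearEquiv_extend {K V : Type*} [DivisionRing K] [AddCommGroup V]
    [Module K V] [FiniteDimensional K V] {U₁ U₂ : Submodule K V} (φ : U₁ ≃ₗ[K] U₂) :
    ∃ e : V ≃ₗ[K] V, ∀ x : U₁, e x = φ x := by
  obtain ⟨C₁, h₁⟩ := U₁.exists_isCompl
  obtain ⟨C₂, h₂⟩ := U₂.exists_isCompl
  have hrank : Module.finrank K C₁ = Module.finrank K C₂ := by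
    have := φ.finrank_eq
    have := Submodule.finrank_add_eq_of_isCompl h₁
    have := Submodule.finrank_add_eq_of_isCompl h₂
    omega
  refine ⟨(U₁.prodEquivOfIsCompl C₁ h₁).symm ≪≫ₗ φ.prodCongr (.ofFinrankEq _ _ hrank) ≪≫ₗ
    U₂.prodEquivOfIsCompl C₂ h₂, fun x => ?_⟩
  simp

namespace LinearMap

variable {R M M₂ : Type*} [Ring R] [AddCommGroup M] [Module R M] [AddCommGroup M₂] [Module R M₂]

noncomputable def rangeEquivOfKerEq (f g : M →ₗ[R] M₂) (h : ker f = ker g) :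
    range f ≃ₗ[R] range g :=
  f.quotKerEquivRange.symm ≪≫ₗ Submodule.quotEquivOfEq _ _ h ≪≫ₗ g.quotKerEquivRange

@[simp]
theorem rangeEquivOfKerEq_apply (f g : M →ₗ[R] M₂) (h : ker f = ker g) (x : M) :
    (rangeEquivOfKerEq f g h ⟨f x, mem_range_self f x⟩ : M₂) = g x := by
  simp [rangeEquivOfKerEq]

theorem exists_linearEquiv_comp_eq_of_ker_eq_s5 {K V W : Type*} [DivisionRing K]
    [AddCommGroup V] [Module K V] [AddCommGroup W] [Module K W] [FiniteDimensional K W]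
    {f g : V →ₗ[K] W} (h : ker f = ker g) :
    ∃ e : W ≃ₗ[K] W, e.toLinearMap ∘ₗ f = g := by
  obtain ⟨e, he⟩ := Submodule.exists_linearEquiv_extend (rangeEquivOfKerEq f g h)
  exact ⟨e, LinearMap.ext fun x => by simpa using he ⟨f x, mem_range_self f x⟩⟩

end LinearMap

namespace Matrix

theorem mulVec_eq_zero_iff_mulVec_add_eq {R m n : Type*} [Ring R] [Fintype n]
    {A : Matrix m n R} {x₀ : n → R} {d : m → R} (h : A *ᵥ x₀ = d) (y : n → R) :
    A *ᵥ y = 0 ↔ A *ᵥ (x₀ + y) = d := by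
  rw [mulVec_add, h, add_eq_left]

theorem ker_mulVecLin_eq_of_setOf_mulVec_eq {R m n : Type*} [CommRing R] [Fintype n]
    {M N : Matrix m n R} {b c : m → R} {x₀ : n → R} (hx₀ : M *ᵥ x₀ = b)
    (hsol : {x | M *ᵥ x = b} = {x | N *ᵥ x = c}) :
    LinearMap.ker M.mulVecLin = LinearMap.ker N.mulVecLin := by
  have hsol' (x : n → R) : M *ᵥ x = b ↔ N *ᵥ x = c := Set.ext_iff.mp hsol x
  ext y
  simp only [LinearMap.mem_ker, mulVecLin_apply]
  rw [mulVec_eq_zero_iff_mulVec_add_eq hx₀, mulVec_eq_zero_iff_mulVec_add_eq ((hsol' x₀).mp hx₀)]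
  exact hsol' _

theorem exists_isUnit_mul_eq_of_ker_mulVecLin_eq {K m n : Type*} [Field K] [Fintype m]
    [DecidableEq m] [Fintype n] [DecidableEq n] {M N : Matrix m n K}
    (h : LinearMap.ker M.mulVecLin = LinearMap.ker N.mulVecLin) :
    ∃ P : Matrix m m K, IsUnit P ∧ N = P * M := by
  obtain ⟨e, he⟩ := LinearMap.exists_linearEquiv_comp_eq_of_ker_eq_s5 h
  refine ⟨LinearMap.toMatrix' e.toLinearMap,
    LinearMap.isUnit_toMatrix'_iff.mpr ((Module.End.isUnit_iff _).mpr e.bijective), ?_⟩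
  apply toLin'.injective
  rw [toLin'_mul, toLin'_toMatrix', toLin'_apply', toLin'_apply', he]

end Matrix

theorem rowEquiv_of_solution_equivalent_general {F : Type*} [Field F] {p q : ℕ}
    (M N : Matrix (Fin p) (Fin q) F) (b c : Fin p → F)
    (hMb : ∃ x : Fin q → F, M.mulVec x = b)
    (hsol : {x : Fin q → F | M.mulVec x = b} = {x : Fin q → F | N.mulVec x = c}) :
    ∃ P : Matrix (Fin p) (Fin p) F, IsUnit P ∧ N = P * M ∧ c = P.mulVec b := by
  obtain ⟨x₀, hx₀⟩ := hMb
  obtain ⟨P, hP, hPM⟩ := exists_isUnit_mul_eq_of_ker_mulVecLin_eq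
    (ker_mulVecLin_eq_of_setOf_mulVec_eq hx₀ hsol)
  refine ⟨P, hP, hPM, ?_⟩
  have hNx₀ : N *ᵥ x₀ = c := (Set.ext_iff.mp hsol x₀).mp hx₀
  rw [← hNx₀, ← hx₀, hPM, mulVec_mulVec]

/-- Consistent, solution-equivalent linear systems are row equivalent. -/
theorem rowEquiv_of_solution_equivalent {F : Type*} [Field F] {p q : ℕ}
    (M N : Matrix (Fin p) (Fin q) F) (b c : Fin p → F)
    (hMb : ∃ x : Fin q → F, M.mulVec x = b)
    (hNc : ∃ x : Fin q → F, N.mulVec x = c)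
    (hsol : {x : Fin q → F | M.mulVec x = b} = {x : Fin q → F | N.mulVec x = c}) :
    ∃ P : Matrix (Fin p) (Fin p) F, IsUnit P ∧ N = P * M ∧ c = P.mulVec b :=
  rowEquiv_of_solution_equivalent_general M N b c hMb hsol
end

section
/- Let F be a field and let E₁, E₂ be p×q matrices over F that are both in row reduced echelon form. If E₁ and E₂ have the same null space, i.e., for every x ∈ F^q one has E₁·x = 0 if and only if E₂·x = 0, then E₁ = E₂. (A matrix in RREF is completely determined by its null space.) -/
open Matrix

section Aux

open scoped Classical

variable {F : Type*} [Field F] {p q : ℕ}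

lemma pivot_row_unique {E : Matrix (Fin p) (Fin q) F} {i : Fin p} {j j' : Fin q}
    (h : E.IsPivot i j) (h' : E.IsPivot i j') : j = j' := by
  rcases lt_trichotomy j j' with hlt | he | hgt
  · exact absurd (h'.2 j hlt) h.1
  · exact he
  · exact absurd (h.2 j' hgt) h'.1

lemma pivot_col_unique {E : Matrix (Fin p) (Fin q) F} (hE : E.IsRREF)
    {i i' : Fin p} {j : Fin q}
    (h : E.IsPivot i j) (h' : E.IsPivot i' j) : i = i' := by
  by_contra hne
  exact h.1 (hE.2.1 i' j h' i (Ne.symm (by exact fun hc => hne hc.symm) ))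

lemma exists_pivot_of_ne {E : Matrix (Fin p) (Fin q) F} {i : Fin p} {j : Fin q}
    (h : E i j ≠ 0) : ∃ c, E.IsPivot i c := by
  set S := Finset.univ.filter (fun c => E i c ≠ 0) with hS
  have hne : S.Nonempty := ⟨j, by simp [hS, h]⟩
  refine ⟨S.min' hne, ?_, ?_⟩
  · have := S.min'_mem hne
    simpa [hS] using this
  · intro c hc
    by_contra hc0
    exact absurd (S.min'_le c (by simp [hS, hc0])) (not_le.mpr hc)

lemma row_zero_of_no_pivot {E : Matrix (Fin p) (Fin q) F} {i : Fin p}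
    (h : ¬ ∃ c, E.IsPivot i c) (j : Fin q) : E i j = 0 := by
  by_contra h0; exact h (exists_pivot_of_ne h0)

/-- The special solution associated to a non-pivot column `j`. -/
noncomputable def specialSol (E : Matrix (Fin p) (Fin q) F) (j : Fin q) : Fin q → F :=
  fun j'' => if j'' = j then 1 else -∑ i, if E.IsPivot i j'' then E i j else 0

lemma specialSol_self (E : Matrix (Fin p) (Fin q) F) (j : Fin q) :
    specialSol E j j = 1 := by simp [specialSol]

lemma specialSol_gt (E : Matrix (Fin p) (Fin q) F) {j j' : Fin q} (hjj : j < j') :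
    specialSol E j j' = 0 := by
  have hne : j' ≠ j := ne_of_gt hjj
  simp only [specialSol, if_neg hne, neg_eq_zero]
  refine Finset.sum_eq_zero fun i _ => ?_
  split_ifs with hpiv
  · exact hpiv.2 j hjj
  · rfl

/-- Key computation. -/
lemma mulVec_specialSol (E M : Matrix (Fin p) (Fin q) F)
    (hM : ∀ i' j'', E.IsPivot i' j'' → M i' j'' = 1 ∧ ∀ i'', i'' ≠ i' → M i'' j'' = 0)
    {j : Fin q} (hj : ∀ i', ¬ E.IsPivot i' j) (i : Fin p) :
    M.mulVec (specialSol E j) i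
      = M i j - (if ∃ c, E.IsPivot i c then E i j else 0) := by
  have hterm : ∀ j'' : Fin q, j'' ≠ j →
      M i j'' * specialSol E j j'' = -(if E.IsPivot i j'' then E i j else 0) := by
    intro j'' hne
    simp only [specialSol, if_neg hne, mul_neg, Finset.mul_sum, mul_ite, mul_zero]
    congr 1
    have : ∀ i' : Fin p,
        (if E.IsPivot i' j'' then M i j'' * E i' j else 0)
          = if i' = i then (if E.IsPivot i j'' then E i j else 0) else 0 := by
      intro i'
      by_cases hii : i' = i
      · subst hii
        by_cases hpiv : E.IsPivot i' j''
        · simp [hpiv, (hM i' j'' hpiv).1]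
        · simp [hpiv]
      · by_cases hpiv : E.IsPivot i' j''
        · simp [hpiv, hii, (hM i' j'' hpiv).2 i (fun hc => hii hc.symm)]
        · simp [hpiv, hii]
    rw [Finset.sum_congr rfl (fun i' _ => this i')]
    simp
  have hsum : ∑ j'' : Fin q, (if E.IsPivot i j'' then E i j else 0)
      = if ∃ c, E.IsPivot i c then E i j else 0 := by
    by_cases hex : ∃ c, E.IsPivot i c
    · obtain ⟨c, hc⟩ := hex
      rw [if_pos ⟨c, hc⟩]
      rw [Finset.sum_eq_single c]
      · rw [if_pos hc]
      · intro b _ hb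
        rw [if_neg (fun hpb => hb (pivot_row_unique hpb hc))]
      · intro hmem; exact absurd (Finset.mem_univ c) hmem
    · rw [if_neg hex]
      refine Finset.sum_eq_zero fun b _ => ?_
      rw [if_neg (fun hpb => hex ⟨b, hpb⟩)]
  have hmv : M.mulVec (specialSol E j) i
      = ∑ j'' : Fin q, M i j'' * specialSol E j j'' := by
    simp [Matrix.mulVec, dotProduct]
  rw [hmv, ← Finset.add_sum_erase _ _ (Finset.mem_univ j), specialSol_self, mul_one]
  have : ∑ j'' ∈ Finset.univ.erase j, M i j'' * specialSol E j j''
      = ∑ j'' ∈ Finset.univ.erase j, -(if E.IsPivot i j'' then E i j else 0) := by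
    refine Finset.sum_congr rfl fun j'' hj'' => ?_
    exact hterm j'' (Finset.ne_of_mem_erase hj'')
  rw [this, Finset.sum_neg_distrib]
  have herase : ∑ j'' ∈ Finset.univ.erase j, (if E.IsPivot i j'' then E i j else 0)
      = ∑ j'' : Fin q, (if E.IsPivot i j'' then E i j else 0) := by
    rw [Finset.sum_erase]
    rw [if_neg (hj i)]
  rw [herase, hsum]
  ring

lemma specialSol_mem_nullspace {E : Matrix (Fin p) (Fin q) F} (hE : E.IsRREF)
    {j : Fin q} (hj : ∀ i', ¬ E.IsPivot i' j) :
    E.mulVec (specialSol E j) = 0 := by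
  funext i
  have hM : ∀ i' j'', E.IsPivot i' j'' → E i' j'' = 1 ∧ ∀ i'', i'' ≠ i' → E i'' j'' = 0 :=
    fun i' j'' hpiv => ⟨hE.1 i' j'' hpiv, fun i'' hne => hE.2.1 i' j'' hpiv i'' hne⟩
  rw [Pi.zero_apply, mulVec_specialSol E E hM hj i]
  by_cases hex : ∃ c, E.IsPivot i c
  · rw [if_pos hex]; ring
  · rw [if_neg hex, row_zero_of_no_pivot hex j]; ring

/-- If every null vector of `E₂` is a null vector of `E₁`, then every non-pivot
column of `E₂` is a non-pivot column of `E₁`. -/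
lemma no_pivot_mono {E₁ E₂ : Matrix (Fin p) (Fin q) F}
    (h₂ : E₂.IsRREF)
    (h : ∀ x : Fin q → F, E₂.mulVec x = 0 → E₁.mulVec x = 0)
    {j : Fin q} (hnp : ∀ i', ¬ E₂.IsPivot i' j) (i : Fin p) :
    ¬ E₁.IsPivot i j := by
  intro hpiv
  have hx : E₁.mulVec (specialSol E₂ j) = 0 := h _ (specialSol_mem_nullspace h₂ hnp)
  have hrow : (E₁.mulVec (specialSol E₂ j)) i = E₁ i j := by
    have : E₁.mulVec (specialSol E₂ j) i
        = ∑ j'' : Fin q, E₁ i j'' * specialSol E₂ j j'' := by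
      simp [Matrix.mulVec, dotProduct]
    rw [this, Finset.sum_eq_single j]
    · rw [specialSol_self, mul_one]
    · intro b _ hb
      rcases lt_trichotomy b j with hlt | he | hgt
      · rw [hpiv.2 b hlt, zero_mul]
      · exact absurd he hb
      · rw [specialSol_gt E₂ hgt, mul_zero]
    · intro hmem; exact absurd (Finset.mem_univ j) hmem
  rw [hx, Pi.zero_apply] at hrow
  exact hpiv.1 hrow.symm

/-- With equal pivot-column sets, pivots of `E₁` are pivots of `E₂` (same row). -/
lemma pivot_corr {E₁ E₂ : Matrix (Fin p) (Fin q) F}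
    (h₁ : E₁.IsRREF) (h₂ : E₂.IsRREF)
    (hP : ∀ j : Fin q, (∃ i, E₁.IsPivot i j) ↔ (∃ i, E₂.IsPivot i j)) :
    ∀ (j : Fin q) (i : Fin p), E₁.IsPivot i j → E₂.IsPivot i j := by
  have key : ∀ n : ℕ, ∀ j : Fin q, (j : ℕ) = n →
      ∀ i : Fin p, E₁.IsPivot i j → E₂.IsPivot i j := by
    intro n
    induction n using Nat.strong_induction_on with
    | _ n IH =>
      intro j hjn i hpiv
      obtain ⟨i'', hpiv₂⟩ := (hP j).mp ⟨i, hpiv⟩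
      suffices hii : i'' = i by rw [← hii]; exact hpiv₂
      rcases lt_trichotomy i'' i with hlt | he | hgt
      · -- row i'' of E₁ is nonzero, its pivot column c < j, maps to E₂ by IH
        have hnz : ¬ ∀ c, E₁ i'' c = 0 := by
          intro hall
          exact hpiv.1 (h₁.2.2.2 i'' i (le_of_lt hlt) hall j)
        push_neg at hnz
        obtain ⟨c₀, hc₀⟩ := hnz
        obtain ⟨c, hc⟩ := exists_pivot_of_ne hc₀
        have hcj : c < j := h₁.2.2.1 i'' c i j hc hpiv hlt
        have hc2 : E₂.IsPivot i'' c := IH (c : ℕ) (by omega) c rfl i'' hc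
        exact absurd (pivot_row_unique hc2 hpiv₂) (ne_of_lt hcj)
      · exact he
      · -- row i of E₂ is nonzero, its pivot column c₂ < j, pull back to E₁
        have hnz : ¬ ∀ c, E₂ i c = 0 := by
          intro hall
          exact hpiv₂.1 (h₂.2.2.2 i i'' (le_of_lt hgt) hall j)
        push_neg at hnz
        obtain ⟨c₀, hc₀⟩ := hnz
        obtain ⟨c₂, hc₂⟩ := exists_pivot_of_ne hc₀
        have hcj : c₂ < j := h₂.2.2.1 i c₂ i'' j hc₂ hpiv₂ hgt
        obtain ⟨i₀, hi₀⟩ := (hP c₂).mpr ⟨i, hc₂⟩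
        have hi₀2 : E₂.IsPivot i₀ c₂ := IH (c₂ : ℕ) (by omega) c₂ rfl i₀ hi₀
        have : i₀ = i := pivot_col_unique h₂ hi₀2 hc₂
        rw [this] at hi₀
        exact absurd (pivot_row_unique hi₀ hpiv) (ne_of_lt hcj)
  exact fun j i hpiv => key (j : ℕ) j rfl i hpiv

end Aux

/-- A matrix in RREF is completely determined by its null space. -/
theorem rref_eq_of_same_nullspace {F : Type*} [Field F] {p q : ℕ}
    (E₁ E₂ : Matrix (Fin p) (Fin q) F)
    (h₁ : E₁.IsRREF) (h₂ : E₂.IsRREF)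
    (h : ∀ x : Fin q → F, E₁.mulVec x = 0 ↔ E₂.mulVec x = 0) :
    E₁ = E₂ := by
  classical
  -- same pivot columns
  have hP : ∀ j : Fin q, (∃ i, E₁.IsPivot i j) ↔ (∃ i, E₂.IsPivot i j) := by
    intro j
    constructor
    · intro ⟨i, hpiv⟩
      by_contra hnp
      push_neg at hnp
      exact no_pivot_mono h₂ (fun x hx => (h x).mpr hx) hnp i hpiv
    · intro ⟨i, hpiv⟩
      by_contra hnp
      push_neg at hnp
      exact no_pivot_mono h₁ (fun x hx => (h x).mp hx) hnp i hpiv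
  -- pivots correspond row-by-row
  have hcorr₁₂ : ∀ j i, E₁.IsPivot i j → E₂.IsPivot i j := pivot_corr h₁ h₂ hP
  have hcorr₂₁ : ∀ j i, E₂.IsPivot i j → E₁.IsPivot i j := by
    intro j i hpiv
    obtain ⟨i', hi'⟩ := (hP j).mpr ⟨i, hpiv⟩
    have : E₂.IsPivot i' j := hcorr₁₂ j i' hi'
    have hii : i' = i := pivot_col_unique h₂ this hpiv
    rw [← hii]; exact hi'
  -- entrywise equality
  ext i j
  by_cases hrow : ∃ c, E₁.IsPivot i c
  · obtain ⟨c, hc⟩ := hrow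
    have hc₂ : E₂.IsPivot i c := hcorr₁₂ c i hc
    by_cases hpc : ∃ i', E₁.IsPivot i' j
    · -- j is a pivot column of both
      obtain ⟨i', hi'⟩ := hpc
      have hi'₂ : E₂.IsPivot i' j := hcorr₁₂ j i' hi'
      by_cases hii : i = i'
      · rw [hii]
        rw [h₁.1 i' j hi', h₂.1 i' j hi'₂]
      · rw [h₁.2.1 i' j hi' i hii, h₂.2.1 i' j hi'₂ i hii]
    · -- j is not a pivot column; use the special solution of E₂
      have hnp₂ : ∀ i', ¬ E₂.IsPivot i' j := by
        intro i' hpiv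
        exact hpc ⟨i', hcorr₂₁ j i' hpiv⟩
      have hM : ∀ i' j'', E₂.IsPivot i' j'' →
          E₁ i' j'' = 1 ∧ ∀ i'', i'' ≠ i' → E₁ i'' j'' = 0 := by
        intro i' j'' hpiv
        have hpiv₁ : E₁.IsPivot i' j'' := hcorr₂₁ j'' i' hpiv
        exact ⟨h₁.1 i' j'' hpiv₁, fun i'' hne => h₁.2.1 i' j'' hpiv₁ i'' hne⟩
      have hnull : E₁.mulVec (specialSol E₂ j) = 0 :=
        (h _).mpr (specialSol_mem_nullspace h₂ hnp₂)
      have hcomp := mulVec_specialSol E₂ E₁ hM hnp₂ i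
      rw [hnull, Pi.zero_apply] at hcomp
      rw [if_pos ⟨c, hc₂⟩] at hcomp
      exact sub_eq_zero.mp hcomp.symm
  · -- row i is zero in both matrices
    have hrow₂ : ¬ ∃ c, E₂.IsPivot i c := by
      intro ⟨c, hc⟩
      exact hrow ⟨c, hcorr₂₁ c i hc⟩
    rw [row_zero_of_no_pivot hrow j, row_zero_of_no_pivot hrow₂ j]
end

section
/- Let F be a field, let M be a p×q matrix over F, and let E be a p×q matrix in row reduced echelon form that is row equivalent to M. Then for every column index j, the j-th column of E is a pivot column of E if and only if the j-th column of M does not lie in the linear span of the columns of M with index strictly less than j. (The pivot columns of the RREF of M correspond exactly to the Gauche basis columns of M.) -/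
open Matrix

/-!
Both sides are invariant under row equivalence: left multiplication by an invertible `P` maps
each column `v` to `P *ᵥ v` through an injective linear map, which preserves span membership.
So it suffices to treat `E` itself. If row `i` has its pivot in column `j`, every column left of
`j` vanishes in row `i` while column `j` does not. If column `j` carries no pivot, then every row
`i` with `E i j ≠ 0` has its pivot strictly left of `j`, and that pivot column is the standard
basis vector `eᵢ`; hence column `j` is `∑ᵢ E i j • eᵢ`, a combination of earlier columns.
-/

namespace Matrix

theorem transpose_mul_mem_span_image_iff {m n K : Type*} [Fintype m] [DecidableEq m] [Field K]
    {P : Matrix m m K} (hP : IsUnit P) (M : Matrix m n K) (j : n) (s : Set n) :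
    (P * M)ᵀ j ∈ Submodule.span K ((P * M)ᵀ '' s) ↔ Mᵀ j ∈ Submodule.span K (Mᵀ '' s) := by
  have hcol : (P * M)ᵀ j = P.mulVecLin (Mᵀ j) := rfl
  have himg : (P * M)ᵀ '' s = P.mulVecLin '' (Mᵀ '' s) :=
    (Set.image_image (g := P.mulVecLin) (f := fun j => Mᵀ j) s).symm
  rw [hcol, himg]
  exact Submodule.apply_mem_span_image_iff_mem_span (mulVec_injective_iff_isUnit.mpr hP)

variable {F : Type*} [Field F] {p q : ℕ}

theorem exists_isPivot_of_ne_zero (E : Matrix (Fin p) (Fin q) F) {i : Fin p} {j : Fin q}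
    (h : E i j ≠ 0) : ∃ j', E.IsPivot i j' := by
  obtain ⟨j', hj', hmin⟩ := wellFounded_lt.has_min {j | E i j ≠ 0} ⟨j, h⟩
  exact ⟨j', hj', fun k hk => not_not.mp fun hne => hmin k hne hk⟩

theorem IsPivot.transpose_notMem_span {E : Matrix (Fin p) (Fin q) F} {i : Fin p} {j : Fin q}
    (hpiv : E.IsPivot i j) : Eᵀ j ∉ Submodule.span F (Eᵀ '' {j' | j' < j}) := by
  intro hmem
  have hle : Submodule.span F (Eᵀ '' {j' | j' < j}) ≤ LinearMap.ker (LinearMap.proj i) := by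
    rw [Submodule.span_le]
    rintro _ ⟨j', hj', rfl⟩
    exact hpiv.2 j' hj'
  exact hpiv.1 (hle hmem)

theorem IsRREF.transpose_eq_single {E : Matrix (Fin p) (Fin q) F} (hE : E.IsRREF)
    {i : Fin p} {j : Fin q} (hpiv : E.IsPivot i j) : Eᵀ j = Pi.single i 1 := by
  ext i'
  obtain rfl | hi' := eq_or_ne i' i
  · simpa using hE.1 i' j hpiv
  · simpa [hi'] using hE.2.1 i j hpiv i' hi'

theorem IsRREF.single_mem_span_of_ne_zero {E : Matrix (Fin p) (Fin q) F} (hE : E.IsRREF)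
    {j : Fin q} (hj : ∀ i, ¬E.IsPivot i j) {i : Fin p} (hij : E i j ≠ 0) :
    Pi.single i 1 ∈ Submodule.span F (Eᵀ '' {j' | j' < j}) := by
  obtain ⟨c, hc⟩ := E.exists_isPivot_of_ne_zero hij
  have hcj : c < j := by
    rcases lt_trichotomy c j with hlt | rfl | hgt
    · exact hlt
    · exact absurd hc (hj i)
    · exact absurd (hc.2 j hgt) hij
  rw [← hE.transpose_eq_single hc]
  exact Submodule.subset_span ⟨c, hcj, rfl⟩

theorem IsRREF.exists_isPivot_iff {E : Matrix (Fin p) (Fin q) F} (hE : E.IsRREF) (j : Fin q) :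
    (∃ i, E.IsPivot i j) ↔ Eᵀ j ∉ Submodule.span F (Eᵀ '' {j' | j' < j}) := by
  refine ⟨fun ⟨i, hpiv⟩ => hpiv.transpose_notMem_span, fun hnot => ?_⟩
  by_contra! hj
  refine hnot ?_
  rw [← Finset.univ_sum_single (Eᵀ j)]
  refine Submodule.sum_mem _ fun i _ => ?_
  by_cases hij : E i j = 0
  · simp [hij]
  · simpa [← Pi.single_smul] using
      Submodule.smul_mem _ (E i j) (hE.single_mem_span_of_ne_zero hj hij)

end Matrix

/-- The pivot columns of the RREF of `M` correspond exactly to the Gauche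
basis columns of `M`: column `j` of `E` is a pivot column iff column `j` of `M`
is not in the span of the columns of `M` strictly to its left. -/
theorem pivot_iff_gauche {F : Type*} [Field F] {p q : ℕ}
    (M E : Matrix (Fin p) (Fin q) F)
    (hE : E.IsRREF) (hME : M.RowEquiv E) (j : Fin q) :
    (∃ i : Fin p, E.IsPivot i j) ↔
      Mᵀ j ∉ Submodule.span F (Mᵀ '' {j' : Fin q | j' < j}) := by
  obtain ⟨P, hP, rfl⟩ := hME
  rw [hE.exists_isPivot_iff, transpose_mul_mem_span_image_iff hP]
end

section
/- Let F be a field, let M and N be p×q matrices over F with the same null space (for every x ∈ F^q, M·x = 0 if and only if N·x = 0), and let E₁, E₂ be p×q matrices in row reduced echelon form such that E₁ is row equivalent to M and E₂ is row equivalent to N. Then E₁ = E₂. (Matrices with the same null space have the same row reduced echelon form.) -/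
open Matrix

section Aux

variable {F : Type*} [Field F] {p q : ℕ}

/-- Any nonzero entry of a row has a pivot to its left (or at it). -/
lemma exists_pivot_le (E : Matrix (Fin p) (Fin q) F) {i : Fin p} {j : Fin q}
    (h : E i j ≠ 0) : ∃ c, E.IsPivot i c ∧ c ≤ j := by
  classical
  let s : Finset (Fin q) := Finset.univ.filter (fun c => E i c ≠ 0)
  have hjs : j ∈ s := by simp [s, h]
  have hne : s.Nonempty := ⟨j, hjs⟩
  refine ⟨s.min' hne, ⟨?_, ?_⟩, s.min'_le j hjs⟩
  · have := s.min'_mem hne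
    simpa [s] using this
  · intro j' hj'
    by_contra hj'0
    have : j' ∈ s := by simp [s, hj'0]
    exact absurd (s.min'_le j' this) (not_le.mpr hj')

/-- In an RREF matrix, the row of a pivot in a given column is unique. -/
lemma pivot_row_eq {E : Matrix (Fin p) (Fin q) F} (hE : E.IsRREF)
    {i i' : Fin p} {j : Fin q} (h1 : E.IsPivot i j) (h2 : E.IsPivot i' j) : i = i' := by
  by_contra hne
  exact h2.1 (hE.2.1 i j h1 i' (Ne.symm hne))

/-- A row has at most one pivot column. -/
lemma pivot_col_eq {E : Matrix (Fin p) (Fin q) F} {i : Fin p} {j j' : Fin q}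
    (h1 : E.IsPivot i j) (h2 : E.IsPivot i j') : j = j' := by
  rcases lt_trichotomy j j' with h | h | h
  · exact absurd (h2.2 j h) h1.1
  · exact h
  · exact absurd (h1.2 j' h) h2.1

open Classical in
/-- Null space vector associated to a non-pivot column `j` of an RREF matrix. -/
noncomputable def cvec (E : Matrix (Fin p) (Fin q) F) (j : Fin q) : Fin q → F :=
  fun j' =>
    if j' = j then 1
    else if h : j' < j ∧ ∃ i, E.IsPivot i j' then -(E h.2.choose j) else 0

lemma cvec_self (E : Matrix (Fin p) (Fin q) F) (j : Fin q) : cvec E j j = 1 := by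
  simp [cvec]

lemma cvec_support {E : Matrix (Fin p) (Fin q) F} {j j' : Fin q}
    (hne : j' ≠ j) (h0 : cvec E j j' ≠ 0) : j' < j ∧ ∃ i, E.IsPivot i j' := by
  by_contra hcond
  exact h0 (by simp [cvec, if_neg hne, dif_neg hcond])

open Classical in
lemma cvec_spec {E : Matrix (Fin p) (Fin q) F} (hE : E.IsRREF) {i : Fin p} {j j' : Fin q}
    (hlt : j' < j) (hp : E.IsPivot i j') : cvec E j j' = -(E i j) := by
  have hne : j' ≠ j := ne_of_lt hlt
  have hcond : j' < j ∧ ∃ i, E.IsPivot i j' := ⟨hlt, i, hp⟩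
  simp only [cvec, if_neg hne]
  rw [dif_pos hcond, pivot_row_eq hE hcond.2.choose_spec hp]

lemma eval_pos (E B : Matrix (Fin p) (Fin q) F) (hE : E.IsRREF) (j : Fin q) (i : Fin p)
    (hB : ∀ r (j' : Fin q), j' < j → E.IsPivot r j' → B i j' = if i = r then 1 else 0)
    {c : Fin q} (hcj : c < j) (hpc : E.IsPivot i c) :
    B.mulVec (cvec E j) i = B i j - E i j := by
  classical
  have hsum : B.mulVec (cvec E j) i = ∑ j', B i j' * cvec E j j' := by
    simp [Matrix.mulVec, dotProduct]
  have hcne : c ≠ j := ne_of_lt hcj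
  have hsub : ({j, c} : Finset (Fin q)) ⊆ Finset.univ := Finset.subset_univ _
  have hzero : ∀ j' ∈ Finset.univ, j' ∉ ({j, c} : Finset (Fin q)) →
      B i j' * cvec E j j' = 0 := by
    intro j' _ hmem
    rw [Finset.mem_insert, Finset.mem_singleton] at hmem
    push_neg at hmem
    obtain ⟨hne1, hne2⟩ := hmem
    by_cases h0 : cvec E j j' = 0
    · rw [h0, mul_zero]
    · obtain ⟨hlt, r, hpr⟩ := cvec_support hne1 h0
      have hir : i ≠ r := by
        rintro rfl
        exact hne2 (pivot_col_eq hpr hpc)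
      rw [hB r j' hlt hpr, if_neg hir, zero_mul]
  rw [hsum, ← Finset.sum_subset hsub hzero, Finset.sum_pair hcne.symm,
      cvec_self, mul_one, cvec_spec hE hcj hpc, hB i c hcj hpc, if_pos rfl, one_mul]
  ring

lemma eval_neg (E B : Matrix (Fin p) (Fin q) F) (hE : E.IsRREF) (j : Fin q) (i : Fin p)
    (hB : ∀ r (j' : Fin q), j' < j → E.IsPivot r j' → B i j' = if i = r then 1 else 0)
    (hex : ∀ c, c < j → ¬E.IsPivot i c) :
    B.mulVec (cvec E j) i = B i j := by
  classical
  have hsum : B.mulVec (cvec E j) i = ∑ j', B i j' * cvec E j j' := by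
    simp [Matrix.mulVec, dotProduct]
  rw [hsum, Finset.sum_eq_single j]
  · rw [cvec_self, mul_one]
  · intro b _ hb
    by_cases h0 : cvec E j b = 0
    · rw [h0, mul_zero]
    · obtain ⟨hlt, r, hpr⟩ := cvec_support hb h0
      have hir : i ≠ r := fun h => hex b hlt (by rw [h]; exact hpr)
      rw [hB r b hlt hpr, if_neg hir, zero_mul]
  · intro hj
    exact absurd (Finset.mem_univ j) hj

/-- The vector `cvec E j` lies in the null space of `E` when `j` is not a pivot column. -/
lemma mulVec_cvec {E : Matrix (Fin p) (Fin q) F} (hE : E.IsRREF) {j : Fin q}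
    (hnp : ∀ i, ¬E.IsPivot i j) : E.mulVec (cvec E j) = 0 := by
  classical
  funext i
  show E.mulVec (cvec E j) i = 0
  have hB : ∀ r (j' : Fin q), j' < j → E.IsPivot r j' → E i j' = if i = r then 1 else 0 := by
    intro r j' _ hp
    by_cases h : i = r
    · subst h; rw [if_pos rfl]; exact hE.1 i j' hp
    · rw [if_neg h]; exact hE.2.1 r j' hp i h
  by_cases hex : ∃ c, c < j ∧ E.IsPivot i c
  · obtain ⟨c, hcj, hpc⟩ := hex
    rw [eval_pos E E hE j i hB hcj hpc, sub_self]
  · push_neg at hex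
    rw [eval_neg E E hE j i hB hex]
    by_contra h0
    obtain ⟨c, hpc, hle⟩ := exists_pivot_le E h0
    rcases lt_or_eq_of_le hle with h' | h'
    · exact hex c h' hpc
    · exact hnp i (h' ▸ hpc)

/-- If `j` is not a pivot column of `B` (RREF) and every null vector of `B` is a null
vector of `A`, then `j` is not a pivot column of `A`. -/
lemma no_pivot_transfer {A B : Matrix (Fin p) (Fin q) F} (hB : B.IsRREF) (j : Fin q)
    (hnull : ∀ x, B.mulVec x = 0 → A.mulVec x = 0)
    (hnp : ∀ i, ¬B.IsPivot i j) {i : Fin p} (hp : A.IsPivot i j) : False := by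
  classical
  have hx1 : A.mulVec (cvec B j) = 0 := hnull _ (mulVec_cvec hB hnp)
  have hval : A.mulVec (cvec B j) i = A i j := by
    have hsum : A.mulVec (cvec B j) i = ∑ j', A i j' * cvec B j j' := by
      simp [Matrix.mulVec, dotProduct]
    rw [hsum, Finset.sum_eq_single j]
    · rw [cvec_self, mul_one]
    · intro b _ hb
      by_cases h0 : cvec B j b = 0
      · rw [h0, mul_zero]
      · obtain ⟨hlt, _⟩ := cvec_support hb h0
        rw [hp.2 b hlt, zero_mul]
    · intro hj
      exact absurd (Finset.mem_univ j) hj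
  have h0 : A i j = 0 := by
    have := congrFun hx1 i
    rw [hval] at this
    simpa using this
  exact hp.1 h0

/-- Comparing pivot rows at a common pivot column. -/
lemma pivot_row_le {A B : Matrix (Fin p) (Fin q) F} (hA : A.IsRREF) (hB : B.IsRREF)
    (j : Fin q) (hiff : ∀ i (j' : Fin q), j' < j → (A.IsPivot i j' ↔ B.IsPivot i j'))
    {i₁ i₂ : Fin p} (hp₁ : A.IsPivot i₁ j) (hp₂ : B.IsPivot i₂ j) : i₁ ≤ i₂ := by
  by_contra hlt
  push_neg at hlt
  have hnz : ¬∀ c, A i₂ c = 0 := by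
    intro hz
    exact hp₁.1 (hA.2.2.2 i₂ i₁ hlt.le hz j)
  push_neg at hnz
  obtain ⟨c0, hc0⟩ := hnz
  obtain ⟨c, hpc, _⟩ := exists_pivot_le A hc0
  have hcj : c < j := hA.2.2.1 i₂ c i₁ j hpc hp₁ hlt
  have hBc : B.IsPivot i₂ c := (hiff i₂ c hcj).mp hpc
  exact absurd (pivot_col_eq hBc hp₂) (ne_of_lt hcj)

/-- Uniqueness of RREF among matrices with the same null space. -/
lemma rref_unique {E₁ E₂ : Matrix (Fin p) (Fin q) F}
    (h₁ : E₁.IsRREF) (h₂ : E₂.IsRREF)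
    (hnull : ∀ x, E₁.mulVec x = 0 ↔ E₂.mulVec x = 0) : E₁ = E₂ := by
  classical
  by_contra hne
  have hS : ∃ j : Fin q, ∃ i, E₁ i j ≠ E₂ i j := by
    by_contra hc
    push_neg at hc
    exact hne (by ext i j; exact hc j i)
  let S : Finset (Fin q) := Finset.univ.filter fun j => ∃ i, E₁ i j ≠ E₂ i j
  have hSne : S.Nonempty := ⟨hS.choose, by simp [S]; exact hS.choose_spec⟩
  set j := S.min' hSne with hjdef
  have hjS : j ∈ S := S.min'_mem hSne
  obtain ⟨i0, hi0⟩ : ∃ i, E₁ i j ≠ E₂ i j := by simpa [S] using hjS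
  have hcol : ∀ j' : Fin q, j' < j → ∀ i, E₁ i j' = E₂ i j' := by
    intro j' hlt i
    by_contra hne'
    have hmem : j' ∈ S := by simp [S]; exact ⟨i, hne'⟩
    exact absurd (S.min'_le j' hmem) (not_le.mpr hlt)
  have hpiviff : ∀ i (j' : Fin q), j' < j → (E₁.IsPivot i j' ↔ E₂.IsPivot i j') := by
    intro i j' hlt
    constructor
    · rintro ⟨ha, hb⟩
      exact ⟨by rw [← hcol j' hlt i]; exact ha,
        fun j'' hj'' => by rw [← hcol j'' (hj''.trans hlt) i]; exact hb j'' hj''⟩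
    · rintro ⟨ha, hb⟩
      exact ⟨by rw [hcol j' hlt i]; exact ha,
        fun j'' hj'' => by rw [hcol j'' (hj''.trans hlt) i]; exact hb j'' hj''⟩
  apply hi0
  by_cases hp₁ : ∃ i, E₁.IsPivot i j
  · by_cases hp₂ : ∃ i, E₂.IsPivot i j
    · -- both pivot columns: same pivot row, columns are a standard basis vector
      obtain ⟨i₁, hpi₁⟩ := hp₁
      obtain ⟨i₂, hpi₂⟩ := hp₂
      have hle1 := pivot_row_le h₁ h₂ j hpiviff hpi₁ hpi₂
      have hle2 := pivot_row_le h₂ h₁ j (fun i j' hlt => (hpiviff i j' hlt).symm) hpi₂ hpi₁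
      have heq : i₁ = i₂ := le_antisymm hle1 hle2
      subst heq
      by_cases hi : i0 = i₁
      · subst hi
        rw [h₁.1 _ _ hpi₁, h₂.1 _ _ hpi₂]
      · rw [h₁.2.1 _ _ hpi₁ i0 hi, h₂.2.1 _ _ hpi₂ i0 hi]
    · -- pivot in E₁ but not in E₂ : impossible
      obtain ⟨i₁, hpi₁⟩ := hp₁
      exact absurd (no_pivot_transfer h₂ j (fun x hx => (hnull x).mpr hx)
        (not_exists.mp hp₂) hpi₁) (not_false)
  · by_cases hp₂ : ∃ i, E₂.IsPivot i j
    · -- pivot in E₂ but not in E₁ : impossible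
      obtain ⟨i₂, hpi₂⟩ := hp₂
      exact absurd (no_pivot_transfer h₁ j (fun x hx => (hnull x).mp hx)
        (not_exists.mp hp₁) hpi₂) (not_false)
    · -- neither is a pivot column
      have hnp₁ : ∀ i, ¬E₁.IsPivot i j := not_exists.mp hp₁
      have hx2 : E₂.mulVec (cvec E₁ j) = 0 := (hnull _).mp (mulVec_cvec h₁ hnp₁)
      have hB : ∀ r (j' : Fin q), j' < j → E₁.IsPivot r j' →
          E₂ i0 j' = if i0 = r then 1 else 0 := by
        intro r j' hlt hp
        rw [← hcol j' hlt i0]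
        by_cases hir : i0 = r
        · subst hir; rw [if_pos rfl]; exact h₁.1 i0 j' hp
        · rw [if_neg hir]; exact h₁.2.1 r j' hp i0 hir
      have h00 : E₂.mulVec (cvec E₁ j) i0 = 0 := by rw [hx2]; rfl
      by_cases hex : ∃ c, c < j ∧ E₁.IsPivot i0 c
      · obtain ⟨c, hcj, hpc⟩ := hex
        rw [eval_pos E₁ E₂ h₁ j i0 hB hcj hpc] at h00
        exact (sub_eq_zero.mp h00).symm
      · push_neg at hex
        rw [eval_neg E₁ E₂ h₁ j i0 hB hex] at h00
        rw [h00]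
        by_contra h0'
        obtain ⟨c, hpc, hle⟩ := exists_pivot_le E₁ h0'
        rcases lt_or_eq_of_le hle with h' | h'
        · exact hex c h' hpc
        · exact hnp₁ i0 (h' ▸ hpc)

end Aux

/-- Matrices with the same null space have the same row reduced echelon form. -/
theorem rref_eq_of_nullspace_eq {F : Type*} [Field F] {p q : ℕ}
    (M N E₁ E₂ : Matrix (Fin p) (Fin q) F)
    (h : ∀ x : Fin q → F, M.mulVec x = 0 ↔ N.mulVec x = 0)
    (h₁ : E₁.IsRREF) (hME₁ : M.RowEquiv E₁)
    (h₂ : E₂.IsRREF) (hNE₂ : N.RowEquiv E₂) :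
    E₁ = E₂ := by
  obtain ⟨P, hP, hPE⟩ := hME₁
  obtain ⟨Q, hQ, hQE⟩ := hNE₂
  have key : ∀ (P : Matrix (Fin p) (Fin p) F), IsUnit P →
      ∀ v : Fin p → F, P.mulVec v = 0 ↔ v = 0 := by
    intro P hP v
    constructor
    · intro hv
      obtain ⟨u, rfl⟩ := hP
      calc v = ((↑u⁻¹ * ↑u : Matrix (Fin p) (Fin p) F)).mulVec v := by
              rw [u.inv_mul, Matrix.one_mulVec]
        _ = (↑u⁻¹ : Matrix (Fin p) (Fin p) F).mulVec ((↑u : Matrix (Fin p) (Fin p) F).mulVec v) := by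
              rw [Matrix.mulVec_mulVec]
        _ = 0 := by rw [hv, Matrix.mulVec_zero]
    · rintro rfl
      simp
  have hnull : ∀ x : Fin q → F, E₁.mulVec x = 0 ↔ E₂.mulVec x = 0 := by
    intro x
    rw [hPE, hQE, ← Matrix.mulVec_mulVec, ← Matrix.mulVec_mulVec,
        key P hP, key Q hQ, h]
  exact rref_unique h₁ h₂ hnull
end
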